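/- arXiv:2502.05600 — 5 statements merged into one kernel-verified Lean document; each statement's English description precedes it below -/
import Mathlib

section
/- Let d ≥ 1, let X ⊆ ℝ^d be nonempty, closed and convex, let x₀ ∈ X, x★ ∈ X, r_ε > 0, and let (g_k)_{k≥0} be vectors in ℝ^d with g₀ ≠ 0. Define recursively r̄_k = max(r_ε, max_{j≤k} ‖x_j − x₀‖), G_k = Σ_{i=0}^{k} ‖g_i‖², η_k = r̄_k / √(G_k), and x_{k+1} = Π_X(x_k − η_k g_k). Let s̄_t = max_{k≤t} ‖x_k − x★‖. Then for every t ≥ 1: Σ_{k=0}^{t−1} r̄_k ⟨g_k, x_k − x★⟩ ≤ r̄_t (2 s̄_t + r̄_t) √(G_{t−1}). -/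
/-!
Projection onto `X` does not move points away from `x★ ∈ X`, so every step satisfies
`‖x_{k+1} - x★‖² ≤ ‖x_k - x★‖² - 2 η_k ⟪g_k, x_k - x★⟫ + η_k² ‖g_k‖²`. Multiplying by
`√G_k / 2` and summing leaves two sums. The first, `∑ √G_k (‖x_k - x★‖² - ‖x_{k+1} - x★‖²)`, is
an Abel sum against the nondecreasing weights `√G_k`, hence at most `√G_{t-1}` times
`max_k (‖x_k - x★‖² - ‖x_t - x★‖²) ≤ 4 r̄_t s̄_t`. The second, `∑ r̄_k² ‖g_k‖² / √G_k`, is at most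
`r̄_t² ∑ ‖g_k‖² / √G_k ≤ 2 r̄_t² √G_{t-1}`, since `a / √(S + a) ≤ 2 (√(S + a) - √S)`.
-/

open Finset
open scoped RealInnerProductSpace

section RunningMax

variable {α : Type*} [SemilatticeSup α]

theorem le_sup'_range_succ (f : ℕ → α) {j k : ℕ} (h : j ≤ k) :
    f j ≤ (range (k + 1)).sup' nonempty_range_add_one f :=
  le_sup' f (mem_range.2 (Nat.lt_succ_of_le h))

theorem monotone_sup'_range_succ (f : ℕ → α) :
    Monotone fun k => (range (k + 1)).sup' nonempty_range_add_one f :=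
  fun _ _ h => sup'_mono f (range_subset_range.2 (Nat.succ_le_succ h)) _

end RunningMax

theorem sq_norm_sub_sub_sq_norm_sub_le {E : Type*} [SeminormedAddCommGroup E] {u v o y : E}
    {r s : ℝ} (hu : ‖u - o‖ ≤ r) (hv : ‖v - o‖ ≤ r) (hus : ‖u - y‖ ≤ s) (hvs : ‖v - y‖ ≤ s) :
    ‖u - y‖ ^ 2 - ‖v - y‖ ^ 2 ≤ 4 * r * s := by
  have hdiff : ‖u - y‖ - ‖v - y‖ ≤ 2 * r := calc
    _ ≤ ‖u - v‖ := by simpa using norm_sub_norm_le (u - y) (v - y)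
    _ ≤ ‖u - o‖ + ‖v - o‖ := norm_sub_rev v o ▸ norm_sub_le_norm_sub_add_norm_sub u o v
    _ ≤ 2 * r := by linarith
  nlinarith [norm_nonneg (u - y), norm_nonneg (v - y), norm_nonneg (u - o)]

section Projection

variable {E : Type*} [NormedAddCommGroup E] [InnerProductSpace ℝ E]

theorem Convex.norm_sub_le_of_forall_norm_sub_le {K : Set E} (hK : Convex ℝ K)
    {z p y : E} (hp : p ∈ K) (hmin : ∀ w ∈ K, ‖z - p‖ ≤ ‖z - w‖) (hy : y ∈ K) :
    ‖p - y‖ ≤ ‖z - y‖ := by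
  have : Nonempty K := ⟨⟨p, hp⟩⟩
  have hinf : ‖z - p‖ = ⨅ w : K, ‖z - w‖ :=
    (show IsLeast (Set.range fun w : K => ‖z - w‖) ‖z - p‖ from
      ⟨⟨⟨p, hp⟩, rfl⟩, by rintro _ ⟨w, rfl⟩; exact hmin w w.2⟩).isGLB.ciInf_eq.symm
  have hinner : ⟪z - p, y - p⟫ ≤ 0 := (norm_eq_iInf_iff_real_inner_le_zero hK hp).1 hinf y hy
  have hexp := norm_sub_sq_real (z - p) (y - p)
  rw [sub_sub_sub_cancel_right] at hexp
  rw [← sq_le_sq₀ (norm_nonneg _) (norm_nonneg _), norm_sub_rev p y]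
  nlinarith [sq_nonneg ‖z - p‖]

theorem mul_inner_le_of_norm_sub_le_norm_sub_div_smul {x x' y g : E} {r w : ℝ}
    (hw : 0 < w) (h : ‖x' - y‖ ≤ ‖x - (r / w) • g - y‖) :
    r * ⟪g, x - y⟫ ≤ (w * (‖x - y‖ ^ 2 - ‖x' - y‖ ^ 2) + r ^ 2 * (‖g‖ ^ 2 / w)) / 2 := by
  obtain ⟨η, rfl⟩ : ∃ η, r = η * w := ⟨r / w, (div_mul_cancel₀ r hw.ne').symm⟩
  rw [mul_div_cancel_right₀ η hw.ne'] at h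
  have hexp := norm_sub_sq_real (x - y) (η • g)
  rw [sub_right_comm, real_inner_smul_right, real_inner_comm, norm_smul, Real.norm_eq_abs,
    mul_pow, sq_abs] at hexp
  have hsq := pow_le_pow_left₀ (norm_nonneg _) h 2
  rw [show (η * w) ^ 2 * (‖g‖ ^ 2 / w) = w * (η ^ 2 * ‖g‖ ^ 2) by field_simp]
  nlinarith [mul_le_mul_of_nonneg_left hsq hw.le]

end Projection

theorem Monotone.sum_range_mul_sub_succ_le {w D : ℕ → ℝ} {M : ℝ} (hw : Monotone w)
    (hw0 : 0 ≤ w 0) : ∀ n, (∀ k ≤ n, D k ≤ M) →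
      ∑ k ∈ range (n + 1), w k * (D k - D (k + 1)) ≤ w n * (M - D (n + 1))
  | 0, hD => by
    rw [sum_range_one]
    nlinarith [hD 0 le_rfl]
  | n + 1, hD => by
    have ih := hw.sum_range_mul_sub_succ_le hw0 n fun k hk => hD k (hk.trans n.le_succ)
    have hwn : w n ≤ w (n + 1) := hw n.le_succ
    have hDn : D (n + 1) ≤ M := hD (n + 1) le_rfl
    rw [sum_range_succ]
    nlinarith [mul_le_mul_of_nonneg_right hwn (sub_nonneg.2 hDn)]

theorem div_sqrt_add_le_two_mul_sub_sqrt {s a : ℝ} (hs : 0 ≤ s) (ha : 0 ≤ a) :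
    a / √(s + a) ≤ 2 * (√(s + a) - √s) := by
  rcases ha.eq_or_lt with rfl | ha
  · simp
  have hB : 0 < √(s + a) := Real.sqrt_pos.2 (by linarith)
  have hAB : √s ≤ √(s + a) := Real.sqrt_le_sqrt (by linarith)
  rw [div_le_iff₀ hB]
  -- `a = (√(s + a) - √s) * (√(s + a) + √s)`
  nlinarith [Real.sq_sqrt hs, Real.sq_sqrt (add_nonneg hs ha.le)]

theorem sum_range_div_sqrt_partialSum_le {a : ℕ → ℝ} (ha : ∀ k, 0 ≤ a k) :
    ∀ n, ∑ k ∈ range n, a k / √(∑ i ∈ range (k + 1), a i) ≤ 2 * √(∑ i ∈ range n, a i)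
  | 0 => by simp
  | n + 1 => by
    have ih := sum_range_div_sqrt_partialSum_le ha n
    have hstep := div_sqrt_add_le_two_mul_sub_sqrt
      (sum_nonneg fun i (_ : i ∈ range n) => ha i) (ha n)
    rw [sum_range_succ, sum_range_succ a n]
    linarith

theorem sum_range_mul_div_sqrt_partialSum_le {a r : ℕ → ℝ} (ha : ∀ k, 0 ≤ a k)
    (hr : Monotone r) (hr0 : 0 ≤ r 0) (n : ℕ) :
    ∑ k ∈ range n, r k * (a k / √(∑ i ∈ range (k + 1), a i)) ≤
      r n * (2 * √(∑ i ∈ range n, a i)) := by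
  have hq : ∀ k, 0 ≤ a k / √(∑ i ∈ range (k + 1), a i) := fun k =>
    div_nonneg (ha k) (Real.sqrt_nonneg _)
  calc ∑ k ∈ range n, r k * (a k / √(∑ i ∈ range (k + 1), a i))
      ≤ ∑ k ∈ range n, r n * (a k / √(∑ i ∈ range (k + 1), a i)) :=
        sum_le_sum fun k hk => mul_le_mul_of_nonneg_right (hr (mem_range.1 hk).le) (hq k)
    _ = r n * ∑ k ∈ range n, a k / √(∑ i ∈ range (k + 1), a i) := (mul_sum _ _ _).symm
    _ ≤ r n * (2 * √(∑ i ∈ range n, a i)) := by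
        gcongr
        · exact hr0.trans (hr n.zero_le)
        · exact sum_range_div_sqrt_partialSum_le ha n

theorem stmt3_general (d : ℕ)
    (X : Set (EuclideanSpace ℝ (Fin d)))
    (hXconv : Convex ℝ X)
    -- `proj` is the Euclidean metric projection onto `X`
    (proj : EuclideanSpace ℝ (Fin d) → EuclideanSpace ℝ (Fin d))
    (hprojMem : ∀ z, proj z ∈ X)
    (hprojMin : ∀ z, ∀ y ∈ X, ‖z - proj z‖ ≤ ‖z - y‖)
    (x : ℕ → EuclideanSpace ℝ (Fin d)) (xstar : EuclideanSpace ℝ (Fin d))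
    (hxstar : xstar ∈ X)
    (reps : ℝ)
    (g : ℕ → EuclideanSpace ℝ (Fin d)) (hg0 : g 0 ≠ 0)
    (rbar : ℕ → ℝ)
    (hrbar : ∀ k, rbar k = max reps ((Finset.range (k + 1)).sup' Finset.nonempty_range_add_one
      fun j => ‖x j - x 0‖))
    (G : ℕ → ℝ) (hG : ∀ k, G k = ∑ i ∈ Finset.range (k + 1), ‖g i‖ ^ 2)
    (η : ℕ → ℝ) (hη : ∀ k, η k = rbar k / Real.sqrt (G k))
    (hrec : ∀ k, x (k + 1) = proj (x k - η k • g k))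
    (sbar : ℕ → ℝ)
    (hsbar : ∀ k, sbar k = (Finset.range (k + 1)).sup' Finset.nonempty_range_add_one
      fun j => ‖x j - xstar‖)
    (t : ℕ) (ht : 1 ≤ t) :
    ∑ k ∈ Finset.range t, rbar k * ⟪g k, x k - xstar⟫ ≤
      rbar t * (2 * sbar t + rbar t) * Real.sqrt (G (t - 1)) := by
  obtain ⟨n, rfl⟩ := Nat.exists_eq_add_of_le' ht
  rw [Nat.add_sub_cancel]
  have hxr : ∀ j k, j ≤ k → ‖x j - x 0‖ ≤ rbar k := fun j k h =>
    (hrbar k).symm ▸ le_max_of_le_right (le_sup'_range_succ (fun j => ‖x j - x 0‖) h)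
  have hxs : ∀ j k, j ≤ k → ‖x j - xstar‖ ≤ sbar k := fun j k h =>
    (hsbar k).symm ▸ le_sup'_range_succ (fun j => ‖x j - xstar‖) h
  have hr : Monotone rbar := fun j k h => by
    rw [hrbar, hrbar]; exact max_le_max le_rfl (monotone_sup'_range_succ _ h)
  have hGmono : Monotone G := monotone_nat_of_le_succ fun k => by
    rw [hG, hG, sum_range_succ _ (k + 1)]; exact le_add_of_nonneg_right (by positivity)
  have hG0 : 0 < G 0 := by rw [hG, sum_range_one]; exact pow_pos (norm_pos_iff.2 hg0) 2
  have hGpos : ∀ k, 0 < √(G k) := fun k => Real.sqrt_pos.2 (hG0.trans_le (hGmono k.zero_le))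
  have hstep : ∀ k, rbar k * ⟪g k, x k - xstar⟫ ≤ (√(G k) * (‖x k - xstar‖ ^ 2 -
      ‖x (k + 1) - xstar‖ ^ 2) + rbar k ^ 2 * (‖g k‖ ^ 2 / √(G k))) / 2 := fun k =>
    mul_inner_le_of_norm_sub_le_norm_sub_div_smul (hGpos k) <| by
      rw [hrec, ← hη]
      exact hXconv.norm_sub_le_of_forall_norm_sub_le (hprojMem _) (hprojMin _) hxstar
  have hdist : ∀ k ≤ n, ‖x k - xstar‖ ^ 2 ≤
      ‖x (n + 1) - xstar‖ ^ 2 + 4 * rbar (n + 1) * sbar (n + 1) := fun k hk => by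
    linarith [sq_norm_sub_sub_sq_norm_sub_le (hxr k (n + 1) (by omega)) (hxr _ _ le_rfl)
      (hxs k (n + 1) (by omega)) (hxs _ _ le_rfl)]
  have hA := (Real.sqrt_monotone.comp hGmono).sum_range_mul_sub_succ_le (hGpos 0).le n hdist
  have hB := sum_range_mul_div_sqrt_partialSum_le (a := fun k => ‖g k‖ ^ 2)
    (r := fun k => rbar k ^ 2) (fun k => by positivity)
    (fun j k h => pow_le_pow_left₀ ((norm_nonneg _).trans (hxr 0 j j.zero_le)) (hr h) 2)
    (by positivity) (n + 1)
  simp only [Function.comp_apply, ← hG] at hA hB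
  calc _ ≤ ∑ k ∈ range (n + 1), (_ + _) / 2 := sum_le_sum fun k _ => hstep k
    _ = (_ + _) / 2 := by rw [← sum_div, sum_add_distrib]
    _ ≤ _ := by linarith

theorem stmt3 (d : ℕ) (hd : 1 ≤ d)
    (X : Set (EuclideanSpace ℝ (Fin d))) (hXne : X.Nonempty) (hXcl : IsClosed X)
    (hXconv : Convex ℝ X)
    -- `proj` is the Euclidean metric projection onto `X`
    (proj : EuclideanSpace ℝ (Fin d) → EuclideanSpace ℝ (Fin d))
    (hprojMem : ∀ z, proj z ∈ X)
    (hprojMin : ∀ z, ∀ y ∈ X, ‖z - proj z‖ ≤ ‖z - y‖)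
    (x : ℕ → EuclideanSpace ℝ (Fin d)) (xstar : EuclideanSpace ℝ (Fin d))
    (hx0 : x 0 ∈ X) (hxstar : xstar ∈ X)
    (reps : ℝ) (hreps : 0 < reps)
    (g : ℕ → EuclideanSpace ℝ (Fin d)) (hg0 : g 0 ≠ 0)
    (rbar : ℕ → ℝ)
    (hrbar : ∀ k, rbar k = max reps ((Finset.range (k + 1)).sup' Finset.nonempty_range_add_one
      fun j => ‖x j - x 0‖))
    (G : ℕ → ℝ) (hG : ∀ k, G k = ∑ i ∈ Finset.range (k + 1), ‖g i‖ ^ 2)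
    (η : ℕ → ℝ) (hη : ∀ k, η k = rbar k / Real.sqrt (G k))
    (hrec : ∀ k, x (k + 1) = proj (x k - η k • g k))
    (sbar : ℕ → ℝ)
    (hsbar : ∀ k, sbar k = (Finset.range (k + 1)).sup' Finset.nonempty_range_add_one
      fun j => ‖x j - xstar‖)
    (t : ℕ) (ht : 1 ≤ t) :
    ∑ k ∈ Finset.range t, rbar k * ⟪g k, x k - xstar⟫ ≤
      rbar t * (2 * sbar t + rbar t) * Real.sqrt (G (t - 1)) :=
  stmt3_general d X hXconv proj hprojMem hprojMin x xstar hxstar reps g hg0 rbar hrbar G hG η hη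
    hrec sbar hsbar t ht
end

section
/- Let d ≥ 1, L ≥ 0, let f : ℝ^d → ℝ be convex and L-Lipschitz with respect to the Euclidean norm, let x★ ∈ ℝ^d, t ≥ 1, let x₀, …, x_{t−1} ∈ ℝ^d, let r̄₀, …, r̄_{t−1} be positive reals, let μ₀, …, μ_{t−1} be positive reals, and set x̄_t = (Σ_{k=0}^{t−1} r̄_k)^{−1} Σ_{k=0}^{t−1} r̄_k x_k. Then f(x̄_t) − f(x★) ≤ (Σ_{k=0}^{t−1} r̄_k)^{−1} Σ_{k=0}^{t−1} r̄_k ( ⟨∇f_{μ_k}(x_k), x_k − x★⟩ + 2 L μ_k ). -/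
/-!
Each smoothed function `f_μ` is convex (an average of translates of `f`), lies within `L μ` of
`f`, and is differentiable: by Rademacher's theorem `f` is differentiable almost everywhere, so
one may differentiate under the integral. The tangent-line inequality for `f_μ` at `x_k`, together
with `|f_μ - f| ≤ L μ` at `x_k` and at `x★`, gives
`f (x_k) - f (x★) ≤ ⟪∇f_μ (x_k), x_k - x★⟫ + 2 L μ`, and Jensen's inequality for the weights `r̄_k`
bounds `f (x̄_t)` by the weighted average of the `f (x_k)`.
-/

open MeasureTheory Metric Finset
open scoped RealInnerProductSpace

/-- The uniform probability measure on the closed Euclidean unit ball in `ℝ^d`. -/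
noncomputable def ballUniform (d : ℕ) : Measure (EuclideanSpace ℝ (Fin d)) :=
  (volume (Metric.closedBall (0 : EuclideanSpace ℝ (Fin d)) 1))⁻¹ •
    volume.restrict (Metric.closedBall 0 1)

/-- The ball-smoothed function `f_μ(x) = E_{u ∼ U(B^d)} [f (x + μ u)]`. -/
noncomputable def smoothed (d : ℕ) (f : EuclideanSpace ℝ (Fin d) → ℝ) (μ : ℝ)
    (x : EuclideanSpace ℝ (Fin d)) : ℝ :=
  ∫ u, f (x + μ • u) ∂(ballUniform d)

/-- The uniform (rotation-invariant) probability measure on the unit sphere `S^{d-1}`,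
realized as the pushforward of the uniform measure on the unit ball under radial
normalization `u ↦ u / ‖u‖`. -/
noncomputable def sphereUniform (d : ℕ) : Measure (EuclideanSpace ℝ (Fin d)) :=
  (ballUniform d).map (fun u => ‖u‖⁻¹ • u)

theorem ConvexOn.add_fderiv_sub_le {E : Type*} [NormedAddCommGroup E] [NormedSpace ℝ E]
    {s : Set E} {g : E → ℝ} (hg : ConvexOn ℝ s g) {φ : E →L[ℝ] ℝ} {x y : E}
    (hx : x ∈ s) (hy : y ∈ s) (hφ : HasFDerivAt g φ x) : g x + φ (y - x) ≤ g y := by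
  set ℓ := AffineMap.lineMap (k := ℝ) x y
  have hderiv : HasDerivAt (g ∘ ℓ) (φ (y - x)) 0 := by
    rw [← AffineMap.lineMap_apply_zero x y (k := ℝ)] at hφ
    exact hφ.comp_hasDerivAt 0 AffineMap.hasDerivAt_lineMap
  have hslope := (hg.comp_affineMap ℓ).le_slope_of_hasDerivAt (x := 0) (y := 1)
    (by simpa [ℓ] using hx) (by simpa [ℓ] using hy) zero_lt_one hderiv
  simp only [slope_def_field, Function.comp_apply, ℓ, AffineMap.lineMap_apply_zero,
    AffineMap.lineMap_apply_one, sub_zero, div_one] at hslope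
  linarith

theorem ConvexOn.map_centerMass_sub_le {ι E : Type*} [AddCommGroup E] [Module ℝ E]
    {C : Set E} {f : E → ℝ} (hf : ConvexOn ℝ C f) {s : Finset ι} {w g : ι → ℝ} {p : ι → E}
    (hw₀ : ∀ i ∈ s, 0 ≤ w i) (hw : 0 < ∑ i ∈ s, w i) (hp : ∀ i ∈ s, p i ∈ C) (z : E)
    (hg : ∀ i ∈ s, f (p i) - f z ≤ g i) :
    f (s.centerMass w p) - f z ≤ (∑ i ∈ s, w i)⁻¹ * ∑ i ∈ s, w i * g i := by
  have hjensen : f (s.centerMass w p) ≤ (∑ i ∈ s, w i)⁻¹ * ∑ i ∈ s, w i * f (p i) := by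
    simpa only [Finset.centerMass, smul_eq_mul, Function.comp_apply]
      using hf.map_centerMass_le hw₀ hw hp
  have hconst : f z = (∑ i ∈ s, w i)⁻¹ * ∑ i ∈ s, w i * f z := by
    rw [← Finset.sum_mul, ← mul_assoc, inv_mul_cancel₀ hw.ne', one_mul]
  calc f (s.centerMass w p) - f z
      ≤ (∑ i ∈ s, w i)⁻¹ * ∑ i ∈ s, w i * (f (p i) - f z) := by
        simp only [mul_sub, Finset.sum_sub_distrib]
        linarith
    _ ≤ (∑ i ∈ s, w i)⁻¹ * ∑ i ∈ s, w i * g i := by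
        gcongr with i hi
        · exact hw₀ i hi
        · exact hg i hi

section Smoothing

variable {d : ℕ} {f : EuclideanSpace ℝ (Fin d) → ℝ}

instance : IsProbabilityMeasure (ballUniform d) := by
  constructor
  rw [ballUniform, Measure.smul_apply, Measure.restrict_apply MeasurableSet.univ,
    Set.univ_inter, smul_eq_mul, ENNReal.inv_mul_cancel
      (measure_closedBall_pos volume 0 one_pos).ne' measure_closedBall_lt_top.ne]

theorem ballUniform_absolutelyContinuous :
    ballUniform d ≪ (volume : Measure (EuclideanSpace ℝ (Fin d))) :=
  Measure.smul_absolutelyContinuous.trans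
    (Measure.absolutelyContinuous_of_le Measure.restrict_le_self)

theorem ae_mem_closedBall_ballUniform :
    ∀ᵐ u ∂(ballUniform d), u ∈ closedBall (0 : EuclideanSpace ℝ (Fin d)) 1 :=
  Measure.ae_smul_measure (ae_restrict_mem measurableSet_closedBall) _

theorem Continuous.integrable_ballUniform_comp_add_smul (hf : Continuous f)
    (x : EuclideanSpace ℝ (Fin d)) (μ : ℝ) :
    Integrable (fun u => f (x + μ • u)) (ballUniform d) :=
  ((hf.comp (continuous_const.add (continuous_const_smul μ))).continuousOn.integrableOn_compact
    (isCompact_closedBall 0 1)).smul_measure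
      (ENNReal.inv_ne_top.2 (measure_closedBall_pos volume _ one_pos).ne')

theorem LipschitzWith.abs_smoothed_sub_le {K : NNReal} (hf : LipschitzWith K f) {μ : ℝ}
    (hμ : 0 ≤ μ) (x : EuclideanSpace ℝ (Fin d)) :
    |smoothed d f μ x - f x| ≤ K * μ := by
  have hsub : smoothed d f μ x - f x = ∫ u, (f (x + μ • u) - f x) ∂(ballUniform d) := by
    rw [integral_sub (hf.continuous.integrable_ballUniform_comp_add_smul x μ)
      (integrable_const _), integral_const, probReal_univ, one_smul, smoothed]
  rw [hsub, ← Real.norm_eq_abs]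
  refine (norm_integral_le_of_norm_le_const (C := K * μ) ?_).trans_eq (by simp)
  filter_upwards [ae_mem_closedBall_ballUniform] with u hu
  calc ‖f (x + μ • u) - f x‖ ≤ K * ‖x + μ • u - x‖ := by
        simpa [← dist_eq_norm] using hf.dist_le_mul (x + μ • u) x
    _ = K * (μ * ‖u‖) := by rw [add_sub_cancel_left, norm_smul, Real.norm_of_nonneg hμ]
    _ ≤ K * (μ * 1) := by gcongr; exact mem_closedBall_zero_iff.1 hu
    _ = K * μ := by rw [mul_one]

theorem convexOn_smoothed (hf : ConvexOn ℝ Set.univ f) (hcont : Continuous f) (μ : ℝ) :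
    ConvexOn ℝ Set.univ (smoothed d f μ) := by
  refine ⟨convex_univ, fun x _ y _ a b ha hb hab => ?_⟩
  have hint := hcont.integrable_ballUniform_comp_add_smul (d := d) (μ := μ)
  have hpointwise : ∀ u, f (a • x + b • y + μ • u) ≤ a * f (x + μ • u) + b * f (y + μ • u) := by
    intro u
    have hcomb : a • x + b • y + μ • u = a • (x + μ • u) + b • (y + μ • u) := by
      rw [smul_add, smul_add, add_add_add_comm, ← add_smul, hab, one_smul]
    rw [hcomb]
    exact hf.2 (Set.mem_univ _) (Set.mem_univ _) ha hb hab
  calc _ ≤ ∫ u, (a * f (x + μ • u) + b * f (y + μ • u)) ∂(ballUniform d) :=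
        integral_mono (hint _) (((hint x).const_mul a).add ((hint y).const_mul b)) hpointwise
    _ = a * smoothed d f μ x + b * smoothed d f μ y := by
        rw [integral_add ((hint x).const_mul a) ((hint y).const_mul b), integral_const_mul,
          integral_const_mul, smoothed, smoothed]

theorem LipschitzWith.hasFDerivAt_smoothed {K : NNReal} (hf : LipschitzWith K f) {μ : ℝ}
    (hμ : μ ≠ 0) (x : EuclideanSpace ℝ (Fin d)) :
    HasFDerivAt (smoothed d f μ) (∫ u, fderiv ℝ f (x + μ • u) ∂(ballUniform d)) x := by
  -- Rademacher's theorem, transported along the invertible affine map `u ↦ x + μ • u`.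
  have hdiff : ∀ᵐ u ∂(ballUniform d), DifferentiableAt ℝ f (x + μ • u) := by
    refine ballUniform_absolutelyContinuous ?_
    have hnull : volume {y | ¬ DifferentiableAt ℝ f y} = 0 := hf.ae_differentiableAt
    change volume ((μ • ·) ⁻¹' ((x + ·) ⁻¹' {y | ¬ DifferentiableAt ℝ f y})) = 0
    rw [Measure.addHaar_preimage_smul volume hμ, measure_preimage_add, hnull, mul_zero]
  have hint := hf.continuous.integrable_ballUniform_comp_add_smul (d := d) (μ := μ)
  refine (hasFDerivAt_integral_of_dominated_loc_of_lip Filter.univ_mem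
    (.of_forall fun y => (hint y).aestronglyMeasurable) (hint x)
    ((measurable_fderiv ℝ f).comp ((measurable_id.const_smul μ).const_add x)).aestronglyMeasurable
    (.of_forall fun u => ?_) (integrable_const (K : ℝ)) ?_).2
  · rw [Real.nnabs_coe, lipschitzOnWith_univ]
    exact .of_dist_le_mul fun a b => by simpa using hf.dist_le_mul (a + μ • u) (b + μ • u)
  · filter_upwards [hdiff] with u hu
    exact hu.hasFDerivAt.comp x ((hasFDerivAt_id x).add_const (μ • u))

theorem sub_le_inner_gradient_smoothed_add {K : NNReal} (hconv : ConvexOn ℝ Set.univ f)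
    (hf : LipschitzWith K f) {μ : ℝ} (hμ : 0 < μ) (x y : EuclideanSpace ℝ (Fin d)) :
    f x - f y ≤ ⟪gradient (smoothed d f μ) x, x - y⟫ + 2 * K * μ := by
  have hgrad : HasGradientAt (smoothed d f μ) (gradient (smoothed d f μ) x) x :=
    (hf.hasFDerivAt_smoothed hμ.ne' x).differentiableAt.hasGradientAt
  have htangent := (convexOn_smoothed hconv hf.continuous μ).add_fderiv_sub_le
    (Set.mem_univ x) (Set.mem_univ y) hgrad.hasFDerivAt
  rw [InnerProductSpace.toDual_apply_apply, ← neg_sub x y, inner_neg_right] at htangent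
  have hx := abs_le.1 (hf.abs_smoothed_sub_le hμ.le x)
  have hy := abs_le.1 (hf.abs_smoothed_sub_le hμ.le y)
  linarith [hx.1, hx.2, hy.1, hy.2]

end Smoothing

theorem stmt8_general (d : ℕ) (L : ℝ) (hL : 0 ≤ L)
    (f : EuclideanSpace ℝ (Fin d) → ℝ)
    (hconv : ConvexOn ℝ Set.univ f)
    (hlip : ∀ x y, |f x - f y| ≤ L * ‖x - y‖)
    (xstar : EuclideanSpace ℝ (Fin d)) (t : ℕ) (ht : 1 ≤ t)
    (x : ℕ → EuclideanSpace ℝ (Fin d))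
    (rbar : ℕ → ℝ) (hr : ∀ k, 0 < rbar k)
    (μ : ℕ → ℝ) (hμ : ∀ k, 0 < μ k)
    (xbar : EuclideanSpace ℝ (Fin d))
    (hxbar : xbar = (∑ k ∈ Finset.range t, rbar k)⁻¹ •
      ∑ k ∈ Finset.range t, rbar k • x k) :
    f xbar - f xstar ≤ (∑ k ∈ Finset.range t, rbar k)⁻¹ *
      ∑ k ∈ Finset.range t, rbar k *
        (⟪gradient (smoothed d f (μ k)) (x k), x k - xstar⟫ + 2 * L * μ k) := by
  have hf : LipschitzWith L.toNNReal f :=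
    .of_dist_le' fun x y => by rw [Real.dist_eq, dist_eq_norm]; exact hlip x y
  have hweight : 0 < ∑ k ∈ range t, rbar k :=
    sum_pos (fun k _ => hr k) (nonempty_range_iff.2 (by omega))
  rw [show xbar = (range t).centerMass rbar x from hxbar]
  refine hconv.map_centerMass_sub_le (fun k _ => (hr k).le) hweight
    (fun k _ => Set.mem_univ (x k)) xstar fun k _ => ?_
  simpa only [Real.coe_toNNReal L hL] using
    sub_le_inner_gradient_smoothed_add hconv hf (hμ k) (x k) xstar

theorem stmt8 (d : ℕ) (hd : 1 ≤ d) (L : ℝ) (hL : 0 ≤ L)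
    (f : EuclideanSpace ℝ (Fin d) → ℝ)
    (hconv : ConvexOn ℝ Set.univ f)
    (hlip : ∀ x y, |f x - f y| ≤ L * ‖x - y‖)
    (xstar : EuclideanSpace ℝ (Fin d)) (t : ℕ) (ht : 1 ≤ t)
    (x : ℕ → EuclideanSpace ℝ (Fin d))
    (rbar : ℕ → ℝ) (hr : ∀ k, 0 < rbar k)
    (μ : ℕ → ℝ) (hμ : ∀ k, 0 < μ k)
    (xbar : EuclideanSpace ℝ (Fin d))
    (hxbar : xbar = (∑ k ∈ Finset.range t, rbar k)⁻¹ •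
      ∑ k ∈ Finset.range t, rbar k • x k) :
    f xbar - f xstar ≤ (∑ k ∈ Finset.range t, rbar k)⁻¹ *
      ∑ k ∈ Finset.range t, rbar k *
        (⟪gradient (smoothed d f (μ k)) (x k), x k - xstar⟫ + 2 * L * μ k) :=
  stmt8_general d L hL f hconv hlip xstar t ht x rbar hr μ hμ xbar hxbar
end

section
/- Let a₀, a₁, …, a_T be a positive nondecreasing sequence of real numbers with T ≥ 1. Then max_{1 ≤ t ≤ T} Σ_{i=0}^{t−1} (a_i / a_t) ≥ (1/e) ( T / log_+(a_T / a₀) − 1 ). -/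
open Finset

/-! Put the T + 1 values log aᵢ, which lie in an interval of length L = log (a_T / a₀), into the
⌊L⌋ + 1 unit buckets ⌊log aᵢ - log a₀⌋. Some bucket holds m ≥ T / (L + 1) indices; if t is the
largest of them, every other index i in it satisfies i < t and aᵢ / a_t > 1/e, so the sum at t is
at least (m - 1) / e. -/

theorem exists_large_subset_of_forall_mem_Icc (f : ℕ → ℝ) {x L : ℝ} (hL : 0 ≤ L) (n : ℕ)
    (hf : ∀ i < n, f i ∈ Set.Icc x (x + L)) :
    ∃ s ⊆ range n, (n : ℝ) / (L + 1) ≤ #s ∧ ∀ i ∈ s, ∀ j ∈ s, f i < f j + 1 := by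
  set K := ⌊L⌋₊
  have hK : (K : ℝ) + 1 ≤ L + 1 := by linarith [Nat.floor_le hL]
  have hmaps : ∀ i ∈ range n, ⌊f i - x⌋₊ ∈ range (K + 1) := fun i hi => by
    have hfi := hf i (mem_range.mp hi)
    exact mem_range.mpr (Nat.lt_succ_of_le (Nat.floor_le_floor (by linarith [hfi.2])))
  obtain ⟨k, -, hk⟩ := exists_le_card_fiber_of_nsmul_le_card_of_maps_to hmaps
    nonempty_range_add_one (b := (n : ℝ) / (K + 1)) (by
      rw [card_range, card_range, nsmul_eq_mul]; push_cast; rw [mul_div_cancel₀ _ (by positivity)])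
  refine ⟨{i ∈ range n | ⌊f i - x⌋₊ = k}, filter_subset _ _,
    le_trans (div_le_div_of_nonneg_left (by positivity) (by positivity) hK) hk, ?_⟩
  intro i hi j hj
  simp only [mem_filter, mem_range] at hi hj
  have hxi := (hf i hi.1).1
  have hxj := (hf j hj.1).1
  have hi' := (Nat.floor_eq_iff (sub_nonneg.mpr hxi)).mp hi.2
  have hj' := (Nat.floor_eq_iff (sub_nonneg.mpr hxj)).mp hj.2
  linarith [hi'.2, hj'.1]

theorem exp_neg_one_lt_div_of_log_lt {x y : ℝ} (hx : 0 < x) (hy : 0 < y)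
    (h : Real.log y < Real.log x + 1) : Real.exp (-1) < x / y := by
  rw [← Real.exp_log (div_pos hx hy), Real.log_div hx.ne' hy.ne']
  exact Real.exp_lt_exp.mpr (by linarith)

theorem card_sub_one_mul_exp_neg_one_le_sum_div_max' {a : ℕ → ℝ} {s : Finset ℕ}
    (hs : s.Nonempty) (hpos : ∀ i ≤ s.max' hs, 0 < a i)
    (hclose : ∀ i ∈ s, ∀ j ∈ s, Real.log (a i) < Real.log (a j) + 1) :
    ((#s : ℝ) - 1) * Real.exp (-1) ≤ ∑ i ∈ range (s.max' hs), a i / a (s.max' hs) := by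
  set t := s.max' hs
  have ht : t ∈ s := s.max'_mem hs
  have herase : s.erase t ⊆ range t := fun i hi =>
    mem_range.mpr (lt_of_le_of_ne (s.le_max' i (mem_of_mem_erase hi)) (ne_of_mem_erase hi))
  have hcard : ((#(s.erase t) : ℕ) : ℝ) = #s - 1 := by
    rw [card_erase_of_mem ht, Nat.cast_sub (card_pos.mpr hs), Nat.cast_one]
  calc ((#s : ℝ) - 1) * Real.exp (-1) = #(s.erase t) • Real.exp (-1) := by
        rw [nsmul_eq_mul, hcard]
    _ ≤ ∑ i ∈ s.erase t, a i / a t := card_nsmul_le_sum _ _ _ fun i hi =>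
        (exp_neg_one_lt_div_of_log_lt (hpos i (s.le_max' i (mem_of_mem_erase hi))) (hpos t le_rfl)
          (hclose t ht i (mem_of_mem_erase hi))).le
    _ ≤ ∑ i ∈ range t, a i / a t := sum_le_sum_of_subset_of_nonneg herase fun i hi _ =>
        div_nonneg (hpos i (mem_range.mp hi).le).le (hpos t le_rfl).le

theorem sum_div_le_sup'_Icc {a : ℕ → ℝ} {T t : ℕ} (hT : 1 ≤ T) (hpos : ∀ i ≤ T, 0 < a i)
    (ht : t ≤ T) :
    ∑ i ∈ range t, a i / a t ≤ (Icc 1 T).sup' (nonempty_Icc.mpr hT)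
      (fun t => ∑ i ∈ range t, a i / a t) := by
  rcases Nat.eq_zero_or_pos t with rfl | ht1
  · refine le_trans ?_ (le_sup' _ (mem_Icc.mpr ⟨hT, le_rfl⟩))
    rw [sum_range_zero]
    exact sum_nonneg fun i hi => div_nonneg (hpos i (mem_range.mp hi).le).le (hpos T le_rfl).le
  · exact le_sup' (fun t => ∑ i ∈ range t, a i / a t) (mem_Icc.mpr ⟨ht1, ht⟩)

theorem stmt10 (T : ℕ) (hT : 1 ≤ T) (a : ℕ → ℝ)
    (hpos : ∀ i ≤ T, 0 < a i)
    (hmono : ∀ i j, i ≤ j → j ≤ T → a i ≤ a j) :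
    (1 / Real.exp 1) * ((T : ℝ) / (Real.log (a T / a 0) + 1) - 1) ≤
      (Finset.Icc 1 T).sup' (Finset.nonempty_Icc.mpr hT)
        (fun t => ∑ i ∈ Finset.range t, a i / a t) := by
  have ha0 := hpos 0 (Nat.zero_le T)
  have haT := hpos T le_rfl
  set L := Real.log (a T / a 0)
  have hL : L = Real.log (a T) - Real.log (a 0) := Real.log_div haT.ne' ha0.ne'
  have hlog : ∀ i < T + 1, Real.log (a i) ∈ Set.Icc (Real.log (a 0)) (Real.log (a 0) + L) :=
    fun i hi => ⟨Real.log_le_log ha0 (hmono 0 i i.zero_le (by omega)),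
      hL ▸ by linarith [Real.log_le_log (hpos i (by omega)) (hmono i T (by omega) le_rfl)]⟩
  have hL0 : 0 ≤ L := by linarith [(hlog T T.lt_succ_self).1]
  obtain ⟨s, hsT, hcard, hclose⟩ :=
    exists_large_subset_of_forall_mem_Icc (fun i => Real.log (a i)) hL0 (T + 1) hlog
  have hs : s.Nonempty := card_pos.mp (by exact_mod_cast (by positivity : (0:ℝ) < _).trans_le hcard)
  have htT : s.max' hs ≤ T := Nat.lt_succ_iff.mp (mem_range.mp (hsT (s.max'_mem hs)))
  have hTs : (T : ℝ) / (L + 1) ≤ #s :=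
    (div_le_div_of_nonneg_right (by push_cast; linarith) (by positivity)).trans hcard
  calc (1 / Real.exp 1) * ((T : ℝ) / (L + 1) - 1)
      = ((T : ℝ) / (L + 1) - 1) * Real.exp (-1) := by rw [Real.exp_neg]; ring
    _ ≤ ((#s : ℝ) - 1) * Real.exp (-1) := by gcongr
    _ ≤ ∑ i ∈ range (s.max' hs), a i / a (s.max' hs) :=
        card_sub_one_mul_exp_neg_one_le_sum_div_max' hs (fun i hi => hpos i (hi.trans htT)) hclose
    _ ≤ _ := sum_div_le_sup'_Icc hT hpos htT
end

section
/- Let a_{−1}, a₀, a₁, …, a_t be a nondecreasing sequence of positive real numbers. Then Σ_{k=0}^{t} (a_k − a_{k−1}) / ( a_k · log_+²(a_k / a_{−1}) ) ≤ 1. -/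
open Finset

/-!
Put `L k = log_+(a_k / a_{-1})`, so that `L_{-1} = 1`, `L` is nondecreasing and
`L_k - L_{k-1} = log (a_k / a_{k-1}) ≥ (a_k - a_{k-1}) / a_k`. Hence the `k`-th term is at most
`(L_k - L_{k-1}) / L_k² ≤ 1 / L_{k-1} - 1 / L_k`, and the sum telescopes to `1 - 1 / L_t ≤ 1`.
-/

noncomputable def logPlus (x : ℝ) : ℝ := Real.log x + 1

lemma one_le_logPlus {x : ℝ} (hx : 1 ≤ x) : 1 ≤ logPlus x := by
  have := Real.log_nonneg hx
  unfold logPlus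
  linarith

lemma logPlus_div_sub_logPlus_div {c x y : ℝ} (hc : c ≠ 0) (hx : x ≠ 0) (hy : y ≠ 0) :
    logPlus (y / c) - logPlus (x / c) = Real.log (y / x) := by
  unfold logPlus
  rw [Real.log_div hy hc, Real.log_div hx hc, Real.log_div hy hx]
  ring

lemma sub_div_le_log_div {x y : ℝ} (hx : 0 < x) (hy : 0 < y) : (y - x) / y ≤ Real.log (y / x) := by
  have := Real.one_sub_inv_le_log_of_pos (div_pos hy hx)
  rwa [inv_div, one_sub_div hy.ne'] at this

lemma sub_div_sq_le_inv_sub_inv {u v : ℝ} (hu : 0 < u) (huv : u ≤ v) :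
    (v - u) / v ^ 2 ≤ u⁻¹ - v⁻¹ := by
  have hv : 0 < v := hu.trans_le huv
  calc (v - u) / v ^ 2 ≤ (v - u) / (u * v) := by
        gcongr
        rw [sq]
        gcongr
    _ = u⁻¹ - v⁻¹ := by field_simp

lemma sub_div_mul_logPlus_sq_le {c x y : ℝ} (hc : 0 < c) (hcx : c ≤ x) (hxy : x ≤ y) :
    (y - x) / (y * logPlus (y / c) ^ 2) ≤ (logPlus (x / c))⁻¹ - (logPlus (y / c))⁻¹ := by
  have hx : 0 < x := hc.trans_le hcx
  have hy : 0 < y := hx.trans_le hxy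
  have hLx : 1 ≤ logPlus (x / c) := one_le_logPlus ((one_le_div hc).2 hcx)
  have hdiff := logPlus_div_sub_logPlus_div hc.ne' hx.ne' hy.ne'
  calc (y - x) / (y * logPlus (y / c) ^ 2) = (y - x) / y / logPlus (y / c) ^ 2 := by
        rw [div_div]
    _ ≤ Real.log (y / x) / logPlus (y / c) ^ 2 := by
        gcongr
        exact sub_div_le_log_div hx hy
    _ = (logPlus (y / c) - logPlus (x / c)) / logPlus (y / c) ^ 2 := by rw [hdiff]
    _ ≤ (logPlus (x / c))⁻¹ - (logPlus (y / c))⁻¹ := by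
        refine sub_div_sq_le_inv_sub_inv (by linarith) ?_
        linarith [Real.log_nonneg ((one_le_div hx).2 hxy)]

/-- The sequence `a 0, a 1, …, a (t+1)` plays the role of `a₋₁, a₀, …, a_t`. -/
theorem stmt11 (t : ℕ) (a : ℕ → ℝ)
    (hpos : ∀ k ≤ t + 1, 0 < a k)
    (hmono : ∀ i j, i ≤ j → j ≤ t + 1 → a i ≤ a j) :
    ∑ k ∈ Finset.range (t + 1),
        (a (k + 1) - a k) / (a (k + 1) * (Real.log (a (k + 1) / a 0) + 1) ^ 2) ≤ 1 := by
  have h0 : 0 < a 0 := hpos 0 (Nat.zero_le _)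
  set L : ℕ → ℝ := fun k => logPlus (a k / a 0)
  have hterm : ∀ k ∈ range (t + 1),
      (a (k + 1) - a k) / (a (k + 1) * L (k + 1) ^ 2) ≤ (L k)⁻¹ - (L (k + 1))⁻¹ := by
    intro k hk
    have hk : k + 1 ≤ t + 1 := Nat.succ_le_of_lt (mem_range.1 hk)
    exact sub_div_mul_logPlus_sq_le h0 (hmono 0 k k.zero_le (by omega))
      (hmono k (k + 1) k.le_succ hk)
  have hLt : 0 < L (t + 1) :=
    one_pos.trans_le (one_le_logPlus ((one_le_div h0).2 (hmono 0 _ (Nat.zero_le _) le_rfl)))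
  calc ∑ k ∈ range (t + 1), (a (k + 1) - a k) / (a (k + 1) * L (k + 1) ^ 2)
      ≤ ∑ k ∈ range (t + 1), ((L k)⁻¹ - (L (k + 1))⁻¹) := sum_le_sum hterm
    _ = (L 0)⁻¹ - (L (t + 1))⁻¹ := sum_range_sub' (fun k => (L k)⁻¹) _
    _ ≤ 1 := by
        have hL0 : L 0 = 1 := by simp [L, logPlus, div_self h0.ne']
        rw [hL0, inv_one, sub_le_self_iff]
        exact (inv_pos.2 hLt).le
end

section
/- Let d ≥ 1, let 0 ≤ L ≤ L̄ with L̄ > 0, let θ ≥ 1, s₀ ≥ 0, and let (g_k)_{k≥0} be vectors in ℝ^d with ‖g_k‖ ≤ Ld for all k. Let (r̄_k)_{k≥0} be a positive nondecreasing sequence, and let ζ ∈ ℕ ∪ {∞} be such that r̄_k ≤ 3 s₀ for all k < ζ. Define G_{−1} = 0, G_k = Σ_{i=0}^{k} ‖g_i‖², G'_k = 8⁴ θ (log(k+2)+1)² (G_{k−1} + 16 θ d² L̄²), and η̃_k = (r̄_k / √(G'_k)) · 1[k < ζ]. Then for every t ≥ 0: Σ_{k=0}^{t} η̃_k² ‖g_k‖²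 ≤ s₀² / 2. -/
/-!
With `T k = C + ∑_{i<k} ‖g i‖²` and `C = 16 θ d² L̄²` we have `G'_k = 8⁴ θ (log (k+2) + 1)² T k`,
and every increment `‖g k‖² = T (k+1) - T k` is at most `C ≤ T k`. Hence `T (k+1) ≤ 2 T k`, so
`‖g k‖² / T k ≤ 2 (log T (k+1) - log T k)`, while `T k ≤ (k+1) C` bounds
`v k := log (T k / C) + 1` by `log (k+1) + 1`. The sum is thus at most `9 s₀² / (8⁴ θ)` times
`2 ∑ (v (k+1) - v k) / v (k+1)² ≤ 2 ∑ (1 / v k - 1 / v (k+1)) ≤ 2 / v 0 = 2`.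
-/

open Finset Real

lemma sub_div_le_two_mul_log_sub_log {x y : ℝ} (hx : 0 < x) (hxy : x ≤ y) (hy : y ≤ 2 * x) :
    (y - x) / x ≤ 2 * (log y - log x) := by
  have hy0 : 0 < y := hx.trans_le hxy
  have hlog : 1 - x / y ≤ log y - log x := by
    simpa [← log_div hy0.ne' hx.ne'] using one_sub_inv_le_log_of_pos (div_pos hy0 hx)
  calc (y - x) / x ≤ (y - x) / (y / 2) :=
        div_le_div_of_nonneg_left (by linarith) (by positivity) (by linarith)
    _ = 2 * (1 - x / y) := by field_simp
    _ ≤ 2 * (log y - log x) := by linarith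

lemma sub_div_sq_le_inv_sub_inv_s15 {a b : ℝ} (ha : 0 < a) (hab : a ≤ b) :
    (b - a) / b ^ 2 ≤ a⁻¹ - b⁻¹ := by
  have hb : 0 < b := ha.trans_le hab
  rw [inv_sub_inv ha.ne' hb.ne', sq]
  exact div_le_div_of_nonneg_left (by linarith) (by positivity)
    (mul_le_mul_of_nonneg_right hab hb.le)

lemma sum_range_sub_div_sq_le_inv {v : ℕ → ℝ} (hv0 : 0 < v 0) (hv : Monotone v) (n : ℕ) :
    ∑ k ∈ range n, (v (k + 1) - v k) / v (k + 1) ^ 2 ≤ (v 0)⁻¹ := by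
  have hpos : ∀ k, 0 < v k := fun k => hv0.trans_le (hv k.zero_le)
  calc ∑ k ∈ range n, (v (k + 1) - v k) / v (k + 1) ^ 2
      ≤ ∑ k ∈ range n, ((v k)⁻¹ - (v (k + 1))⁻¹) :=
        sum_le_sum fun k _ => sub_div_sq_le_inv_sub_inv_s15 (hpos k) (hv k.le_succ)
    _ = (v 0)⁻¹ - (v n)⁻¹ := sum_range_sub' (fun k => (v k)⁻¹) n
    _ ≤ (v 0)⁻¹ := sub_le_self _ (inv_nonneg.2 (hpos n).le)

lemma le_succ_mul_of_succ_le_add {T : ℕ → ℝ} (hstep : ∀ k, T (k + 1) ≤ T k + T 0) (k : ℕ) :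
    T k ≤ (k + 1) * T 0 := by
  induction k with
  | zero => simp
  | succ k ih => push_cast; linarith [hstep k]

theorem sum_range_sub_div_mul_log_sq_le_two {T : ℕ → ℝ} (hT0 : 0 < T 0) (hT : Monotone T)
    (hstep : ∀ k, T (k + 1) ≤ T k + T 0) (n : ℕ) :
    ∑ k ∈ range n, (T (k + 1) - T k) / (T k * (log (k + 2) + 1) ^ 2) ≤ 2 := by
  have hpos : ∀ k, 0 < T k := fun k => hT0.trans_le (hT k.zero_le)
  set v : ℕ → ℝ := fun k => log (T k) - log (T 0) + 1 with hv
  have hv_mono : Monotone v := fun i j hij => by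
    simpa [hv] using log_le_log (hpos i) (hT hij)
  have hv_one : ∀ k, 1 ≤ v k := fun k => by
    simpa [hv] using log_le_log hT0 (hT k.zero_le)
  have hv_le : ∀ k : ℕ, v (k + 1) ≤ log (k + 2) + 1 := fun k => by
    have hgrowth : T (k + 1) ≤ (k + 2) * T 0 := by
      have := le_succ_mul_of_succ_le_add hstep (k + 1)
      push_cast at this
      linarith
    have := log_le_log (hpos (k + 1)) hgrowth
    rw [log_mul (by positivity) hT0.ne'] at this
    simp only [hv]
    linarith
  have hterm : ∀ k : ℕ, (T (k + 1) - T k) / (T k * (log (k + 2) + 1) ^ 2)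
      ≤ 2 * ((v (k + 1) - v k) / v (k + 1) ^ 2) := fun k => by
    have hincr : (T (k + 1) - T k) / T k ≤ 2 * (v (k + 1) - v k) := by
      have := sub_div_le_two_mul_log_sub_log (hpos k) (hT k.le_succ)
        (by linarith [hstep k, hT k.zero_le])
      simp only [hv]
      linarith
    have hv_sq : v (k + 1) ^ 2 ≤ (log (k + 2) + 1) ^ 2 :=
      pow_le_pow_left₀ (by linarith [hv_one (k + 1)]) (hv_le k) 2
    rw [← div_div, mul_div_assoc']
    exact div_le_div₀ (by linarith [hv_mono k.le_succ]) hincr (by nlinarith [hv_one (k + 1)]) hv_sq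
  calc ∑ k ∈ range n, (T (k + 1) - T k) / (T k * (log (k + 2) + 1) ^ 2)
      ≤ 2 * ∑ k ∈ range n, (v (k + 1) - v k) / v (k + 1) ^ 2 := by
        rw [mul_sum]
        exact sum_le_sum fun k _ => hterm k
    _ ≤ 2 * (v 0)⁻¹ := by
        gcongr
        exact sum_range_sub_div_sq_le_inv (by linarith [hv_one 0]) hv_mono n
    _ = 2 := by simp [hv]

lemma ite_div_sqrt_sq_mul_le {p : Prop} [Decidable p] {r s G a : ℝ} (hr : 0 < r)
    (hrs : p → r ≤ 3 * s) (hG : 0 ≤ G) (ha : 0 ≤ a) :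
    (if p then r / √G else 0) ^ 2 * a ≤ 9 * s ^ 2 * (a / G) := by
  split_ifs with hp
  · rw [div_pow, sq_sqrt hG, div_mul_eq_mul_div, mul_div_assoc]
    gcongr
    nlinarith [hrs hp]
  · simp only [ne_eq, OfNat.ofNat_ne_zero, not_false_eq_true, zero_pow, zero_mul]
    positivity

theorem stmt15_general (d : ℕ) (hd : 1 ≤ d) (L Lbar : ℝ) (hLLbar : L ≤ Lbar)
    (hLbar : 0 < Lbar) (θ : ℝ) (hθ : 1 ≤ θ) (s0 : ℝ)
    (g : ℕ → EuclideanSpace ℝ (Fin d)) (hg : ∀ k, ‖g k‖ ≤ L * d)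
    (rbar : ℕ → ℝ) (hrpos : ∀ k, 0 < rbar k)
    (ζ : ℕ∞) (hζ : ∀ k : ℕ, (k : ℕ∞) < ζ → rbar k ≤ 3 * s0)
    (G' : ℕ → ℝ)
    (hG' : ∀ k : ℕ, G' k = 8 ^ 4 * θ * (Real.log ((k : ℝ) + 2) + 1) ^ 2 *
      ((∑ i ∈ Finset.range k, ‖g i‖ ^ 2) + 16 * θ * (d : ℝ) ^ 2 * Lbar ^ 2))
    (ηt : ℕ → ℝ)
    (hηt : ∀ k : ℕ, ηt k = if (k : ℕ∞) < ζ then rbar k / Real.sqrt (G' k) else 0)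
    (t : ℕ) :
    ∑ k ∈ Finset.range (t + 1), ηt k ^ 2 * ‖g k‖ ^ 2 ≤ s0 ^ 2 / 2 := by
  set C : ℝ := 16 * θ * (d : ℝ) ^ 2 * Lbar ^ 2
  set T : ℕ → ℝ := fun k => (∑ i ∈ range k, ‖g i‖ ^ 2) + C with hT
  have hC : 0 < C := by
    have : (0 : ℝ) < d := by exact_mod_cast hd
    positivity
  have hincr : ∀ k, T (k + 1) - T k = ‖g k‖ ^ 2 := fun k => by simp [hT, sum_range_succ]
  have hnorm : ∀ k, ‖g k‖ ^ 2 ≤ C := fun k => by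
    have : ‖g k‖ ≤ Lbar * d := (hg k).trans (by gcongr)
    nlinarith [norm_nonneg (g k), sq_nonneg (Lbar * d)]
  have hsum := sum_range_sub_div_mul_log_sq_le_two (T := T) (by simpa [hT] using hC)
    (monotone_nat_of_le_succ fun k => by linarith [hincr k, sq_nonneg ‖g k‖])
    (fun k => by linarith [hincr k, hnorm k, show T 0 = C by simp [hT]]) (t + 1)
  have hterm : ∀ k : ℕ, ηt k ^ 2 * ‖g k‖ ^ 2
      ≤ 9 * s0 ^ 2 / (8 ^ 4 * θ) * ((T (k + 1) - T k) / (T k * (log (k + 2) + 1) ^ 2)) := by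
    intro k
    have hG'T : G' k = 8 ^ 4 * θ * (log (k + 2) + 1) ^ 2 * T k := hG' k
    have hTk : 0 < T k := by positivity
    grw [hηt, ite_div_sqrt_sq_mul_le (hrpos k) (hζ k) (by rw [hG'T]; positivity) (sq_nonneg _)]
    rw [hincr, hG'T]
    exact le_of_eq (by field_simp)
  calc ∑ k ∈ range (t + 1), ηt k ^ 2 * ‖g k‖ ^ 2
      ≤ 9 * s0 ^ 2 / (8 ^ 4 * θ) * 2 := by
        grw [sum_le_sum fun k _ => hterm k, ← mul_sum, hsum]
    _ ≤ s0 ^ 2 / 2 := by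
        rw [div_mul_eq_mul_div, div_le_div_iff₀ (by positivity) two_pos]
        nlinarith [sq_nonneg s0]

theorem stmt15 (d : ℕ) (hd : 1 ≤ d) (L Lbar : ℝ) (hL : 0 ≤ L) (hLLbar : L ≤ Lbar)
    (hLbar : 0 < Lbar) (θ : ℝ) (hθ : 1 ≤ θ) (s0 : ℝ) (hs0 : 0 ≤ s0)
    (g : ℕ → EuclideanSpace ℝ (Fin d)) (hg : ∀ k, ‖g k‖ ≤ L * d)
    (rbar : ℕ → ℝ) (hrpos : ∀ k, 0 < rbar k) (hrmono : Monotone rbar)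
    (ζ : ℕ∞) (hζ : ∀ k : ℕ, (k : ℕ∞) < ζ → rbar k ≤ 3 * s0)
    (G' : ℕ → ℝ)
    (hG' : ∀ k : ℕ, G' k = 8 ^ 4 * θ * (Real.log ((k : ℝ) + 2) + 1) ^ 2 *
      ((∑ i ∈ Finset.range k, ‖g i‖ ^ 2) + 16 * θ * (d : ℝ) ^ 2 * Lbar ^ 2))
    (ηt : ℕ → ℝ)
    (hηt : ∀ k : ℕ, ηt k = if (k : ℕ∞) < ζ then rbar k / Real.sqrt (G' k) else 0)
    (t : ℕ) :
    ∑ k ∈ Finset.range (t + 1), ηt k ^ 2 * ‖g k‖ ^ 2 ≤ s0 ^ 2 / 2 :=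
  stmt15_general d hd L Lbar hLLbar hLbar θ hθ s0 g hg rbar hrpos ζ hζ G' hG' ηt hηt t
end
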